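/- arXiv:2104.14476 — 2 statements merged into one kernel-verified Lean document; each statement's English description precedes it below -/
import Mathlib

section
/- Let P be a finite set of points in ℝ², let s, t ∈ P with s ≠ t, and let λ ≥ 0. Suppose there exists some r > 0 such that s and t are connected in G_r(P) with weighted shortest-path distance d_r(s,t) ≤ λ. Then the set F = { r > 0 : s and t are connected in G_r(P) and d_r(s,t) ≤ λ } has a least element r*, and r* equals the Euclidean distance ‖p − q‖₂ of two distinct points p, q ∈ P. -/
/-- The (L2) unit-disk graph of a finite point set `P ⊆ ℝ²` with parameter `r`:
two distinct points are adjacent iff their Euclidean distance is at most `r`. -/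
noncomputable def unitDiskGraph (P : Finset (EuclideanSpace ℝ (Fin 2))) (r : ℝ) :
    SimpleGraph {p // p ∈ P} where
  Adj p q := p ≠ q ∧ dist (p : EuclideanSpace ℝ (Fin 2)) (q : EuclideanSpace ℝ (Fin 2)) ≤ r
  symm := by
    constructor
    intro p q h
    exact ⟨h.1.symm, by rw [dist_comm]; exact h.2⟩
  loopless := by
    constructor
    intro p h
    exact h.1 rfl

/-- The total weight of a walk in a graph on a metric space: the sum of the
distances between the endpoints of its edges. -/
noncomputable def walkWeight {V : Type*} [PseudoMetricSpace V] {G : SimpleGraph V}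
    {u v : V} (w : G.Walk u v) : ℝ :=
  (w.edges.map (Sym2.lift ⟨fun a b => dist a b, fun a b => dist_comm a b⟩)).sum

/-- The weighted shortest-path distance between two vertices: the minimum total
weight of a walk joining them. -/
noncomputable def wdist {V : Type*} [PseudoMetricSpace V] (G : SimpleGraph V) (u v : V) : ℝ :=
  sInf {x : ℝ | ∃ w : G.Walk u v, walkWeight w = x}

/-!
The graph `G_r(P)` only depends on which pairwise distances of `P` are at most `r`, so replacing
`r` by the largest pairwise distance `d ≤ r` leaves `G_r(P)`, and hence membership in `F`,
unchanged (an edge exists since `s ≠ t` are connected). Thus every element of `F` dominates an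
element of `F` among the finitely many pairwise distances, and the smallest of these is `min F`.
-/

open Finset

theorem exists_mem_isLeast_of_forall_exists_le {α : Type*} [LinearOrder α] {S : Set α}
    (D : Finset α) (hS : S.Nonempty) (h : ∀ r ∈ S, ∃ d ∈ D, d ∈ S ∧ d ≤ r) :
    ∃ m ∈ D, IsLeast S m := by
  classical
  have hE : (D.filter (· ∈ S)).Nonempty := by
    obtain ⟨r, hr⟩ := hS
    obtain ⟨d, hdD, hdS, -⟩ := h r hr
    exact ⟨d, mem_filter.2 ⟨hdD, hdS⟩⟩
  obtain ⟨hmD, hmS⟩ := mem_filter.1 ((D.filter (· ∈ S)).min'_mem hE)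
  refine ⟨_, hmD, hmS, fun r hr => ?_⟩
  obtain ⟨d, hdD, hdS, hdr⟩ := h r hr
  exact (min'_le _ d (mem_filter.2 ⟨hdD, hdS⟩)).trans hdr

section PairDists

variable {α : Type*} [PseudoMetricSpace α]

noncomputable def pairDists (P : Finset α) : Finset ℝ :=
  P.offDiag.image fun pq => dist pq.1 pq.2

theorem mem_pairDists {P : Finset α} {d : ℝ} :
    d ∈ pairDists P ↔ ∃ p ∈ P, ∃ q ∈ P, p ≠ q ∧ dist p q = d := by
  simp [pairDists, and_assoc]

end PairDists

theorem SimpleGraph.Reachable.exists_adj_of_ne {V : Type*} {G : SimpleGraph V} {u v : V}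
    (h : G.Reachable u v) (huv : u ≠ v) : ∃ x y, G.Adj x y := by
  obtain ⟨w⟩ := h
  cases w with
  | nil => exact absurd rfl huv
  | cons hadj _ => exact ⟨_, _, hadj⟩

section UnitDiskGraph

variable {P : Finset (EuclideanSpace ℝ (Fin 2))}

theorem unitDiskGraph_congr {r r' : ℝ}
    (h : ∀ p ∈ P, ∀ q ∈ P, p ≠ q → (dist p q ≤ r ↔ dist p q ≤ r')) :
    unitDiskGraph P r = unitDiskGraph P r' := by
  ext p q
  simp only [unitDiskGraph]
  exact and_congr_right fun hne => h p p.2 q q.2 (Subtype.coe_ne_coe.2 hne)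

theorem exists_mem_pairDists_unitDiskGraph_eq {r : ℝ} {p q : {x // x ∈ P}}
    (hpq : (unitDiskGraph P r).Adj p q) :
    ∃ d ∈ pairDists P, 0 < d ∧ d ≤ r ∧ unitDiskGraph P d = unitDiskGraph P r := by
  have hE : ((pairDists P).filter (· ≤ r)).Nonempty :=
    ⟨dist (p : EuclideanSpace ℝ (Fin 2)) q, mem_filter.2
      ⟨mem_pairDists.2 ⟨p, p.2, q, q.2, Subtype.coe_ne_coe.2 hpq.1, rfl⟩, hpq.2⟩⟩
  set d := ((pairDists P).filter (· ≤ r)).max' hE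
  obtain ⟨hdD, hdr⟩ := mem_filter.1 (max'_mem _ hE)
  obtain ⟨a, -, b, -, hab, had⟩ := mem_pairDists.1 hdD
  refine ⟨d, hdD, (dist_pos.2 hab).trans_eq had, hdr, unitDiskGraph_congr fun x hx y hy hxy => ?_⟩
  refine ⟨fun hxyd => hxyd.trans hdr, fun hxyr => le_max' _ _ ?_⟩
  exact mem_filter.2 ⟨mem_pairDists.2 ⟨x, hx, y, hy, hxy, rfl⟩, hxyr⟩

end UnitDiskGraph

theorem stmt4_general (P : Finset (EuclideanSpace ℝ (Fin 2)))
    (s t : EuclideanSpace ℝ (Fin 2)) (hs : s ∈ P) (ht : t ∈ P) (hst : s ≠ t)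
    (lam : ℝ)
    (hex : ∃ r : ℝ, 0 < r ∧ (unitDiskGraph P r).Reachable ⟨s, hs⟩ ⟨t, ht⟩ ∧
      wdist (unitDiskGraph P r) ⟨s, hs⟩ ⟨t, ht⟩ ≤ lam) :
    ∃ rstar : ℝ,
      IsLeast {r : ℝ | 0 < r ∧ (unitDiskGraph P r).Reachable ⟨s, hs⟩ ⟨t, ht⟩ ∧
        wdist (unitDiskGraph P r) ⟨s, hs⟩ ⟨t, ht⟩ ≤ lam} rstar ∧
      ∃ p ∈ P, ∃ q ∈ P, p ≠ q ∧ rstar = dist p q := by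
  classical
  obtain ⟨m, hmD, hm⟩ := exists_mem_isLeast_of_forall_exists_le (pairDists P) hex <| by
    rintro r ⟨-, hreach, hle⟩
    obtain ⟨p, q, hpq⟩ := hreach.exists_adj_of_ne (by simpa using hst)
    obtain ⟨d, hdD, hdpos, hdr, hG⟩ := exists_mem_pairDists_unitDiskGraph_eq hpq
    exact ⟨d, hdD, ⟨hdpos, by rwa [hG], by rwa [hG]⟩, hdr⟩
  obtain ⟨p, hp, q, hq, hpq, rfl⟩ := mem_pairDists.1 hmD
  exact ⟨_, hm, p, hp, q, hq, hpq, rfl⟩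

theorem stmt4 (P : Finset (EuclideanSpace ℝ (Fin 2)))
    (s t : EuclideanSpace ℝ (Fin 2)) (hs : s ∈ P) (ht : t ∈ P) (hst : s ≠ t)
    (lam : ℝ) (hlam : 0 ≤ lam)
    (hex : ∃ r : ℝ, 0 < r ∧ (unitDiskGraph P r).Reachable ⟨s, hs⟩ ⟨t, ht⟩ ∧
      wdist (unitDiskGraph P r) ⟨s, hs⟩ ⟨t, ht⟩ ≤ lam) :
    ∃ rstar : ℝ,
      IsLeast {r : ℝ | 0 < r ∧ (unitDiskGraph P r).Reachable ⟨s, hs⟩ ⟨t, ht⟩ ∧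
        wdist (unitDiskGraph P r) ⟨s, hs⟩ ⟨t, ht⟩ ≤ lam} rstar ∧
      ∃ p ∈ P, ∃ q ∈ P, p ≠ q ∧ rstar = dist p q :=
  stmt4_general P s t hs ht hst lam hex
end

section
/- Let p, q ∈ ℝ² be distinct points whose y-coordinates are both strictly less than a real c, and let r > 0. If z₁ and z₂ are two distinct points with ‖z₁ − p‖₂ = ‖z₁ − q‖₂ = r and ‖z₂ − p‖₂ = ‖z₂ − q‖₂ = r, then z₁ + z₂ = p + q. Consequently, at most one point z satisfies ‖z − p‖₂ = ‖z − q‖₂ = r and y(z) > c; that is, the two circles of radius r centered at p and q intersect in at most one point strictly above the horizontal line y = c. -/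
/-!
The point reflection `z ↦ p + q - z` exchanges the two circles of radius `r` about `p ≠ q`, and in
the plane two circles with distinct centres meet in at most two points. So the reflection maps each
of two distinct common points `z₁, z₂` to `z₁` or `z₂`; as they cannot both be its fixed point
`(p + q) / 2`, it swaps them. Hence both have height `(y(p) + y(q)) / 2 < c`, and at most one common
point lies above the line `y = c`.
-/

open Module

theorem dist_add_sub_left_eq {V : Type*} [SeminormedAddCommGroup V] (p q z : V) :
    dist (p + q - z) p = dist z q := by
  rw [dist_comm z, dist_eq_norm, dist_eq_norm]
  abel_nf

theorem add_eq_add_of_dist_eq_of_dist_eq_of_finrank_eq_two {V : Type*} [NormedAddCommGroup V]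
    [InnerProductSpace ℝ V] [FiniteDimensional ℝ V]
    (hd : finrank ℝ V = 2) {p q z₁ z₂ : V} {r : ℝ} (hpq : p ≠ q) (hz : z₁ ≠ z₂)
    (h₁p : dist z₁ p = r) (h₁q : dist z₁ q = r) (h₂p : dist z₂ p = r) (h₂q : dist z₂ q = r) :
    z₁ + z₂ = p + q := by
  have reflect {z : V} (hzp : dist z p = r) (hzq : dist z q = r) :
      p + q - z = z₁ ∨ p + q - z = z₂ := by
    refine EuclideanGeometry.eq_of_dist_eq_of_dist_eq_of_finrank_eq_two hd hpq hz h₁p h₂p ?_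
      h₁q h₂q ?_
    · rw [dist_add_sub_left_eq, hzq]
    · rw [add_comm p q, dist_add_sub_left_eq, hzp]
  rcases reflect h₁p h₁q with h₁ | h₁
  · rcases reflect h₂p h₂q with h₂ | h₂
    · rw [← h₂, sub_add_cancel]
    · refine absurd (smul_right_injective V (two_ne_zero : (2 : ℝ) ≠ 0) ?_) hz
      change (2 : ℝ) • z₁ = (2 : ℝ) • z₂
      rw [two_smul, two_smul, ← sub_eq_iff_eq_add.mp h₁, ← sub_eq_iff_eq_add.mp h₂]
  · rw [← h₁, add_sub_cancel]

theorem stmt10_general (c : ℝ) (p q : EuclideanSpace ℝ (Fin 2)) (hpq : p ≠ q)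
    (hp : p 1 < c) (hq : q 1 < c) (r : ℝ) :
    (∀ z₁ z₂ : EuclideanSpace ℝ (Fin 2), z₁ ≠ z₂ →
      dist z₁ p = r → dist z₁ q = r → dist z₂ p = r → dist z₂ q = r →
      z₁ + z₂ = p + q) ∧
    (∀ z₁ z₂ : EuclideanSpace ℝ (Fin 2),
      dist z₁ p = r → dist z₁ q = r → c < z₁ 1 →
      dist z₂ p = r → dist z₂ q = r → c < z₂ 1 →
      z₁ = z₂) := by
  have sum_eq {z₁ z₂ : EuclideanSpace ℝ (Fin 2)} (hz : z₁ ≠ z₂) :=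
    add_eq_add_of_dist_eq_of_dist_eq_of_finrank_eq_two finrank_euclideanSpace_fin hpq hz (r := r)
  refine ⟨fun z₁ z₂ hz => sum_eq hz, fun z₁ z₂ h₁p h₁q hc₁ h₂p h₂q hc₂ => ?_⟩
  by_contra hz
  have := congrArg (· 1) (sum_eq hz h₁p h₁q h₂p h₂q)
  simp only [PiLp.add_apply] at this
  linarith

theorem stmt10 (c : ℝ) (p q : EuclideanSpace ℝ (Fin 2)) (hpq : p ≠ q)
    (hp : p 1 < c) (hq : q 1 < c) (r : ℝ) (hr : 0 < r) :
    (∀ z₁ z₂ : EuclideanSpace ℝ (Fin 2), z₁ ≠ z₂ →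
      dist z₁ p = r → dist z₁ q = r → dist z₂ p = r → dist z₂ q = r →
      z₁ + z₂ = p + q) ∧
    (∀ z₁ z₂ : EuclideanSpace ℝ (Fin 2),
      dist z₁ p = r → dist z₁ q = r → c < z₁ 1 →
      dist z₂ p = r → dist z₂ q = r → c < z₂ 1 →
      z₁ = z₂) :=
  stmt10_general c p q hpq hp hq r
end
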